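/- arXiv:2509.21748 — 2 statements merged into one kernel-verified Lean document; each statement's English description precedes it below -/
import Mathlib

section
/- Let V be a finite set with |V| = N ≥ 1, let K and s be natural numbers with s ≤ N − K − 1, and suppose that to every x ∈ V is assigned a subset A(x) ⊆ V with |A(x)| = K + 1. For an s-element subset S ⊆ V define coverage(S) = |{x ∈ V : S ∩ A(x) ≠ ∅}| / N. Then the average of coverage(S) over all s-element subsets S of V equals 1 − ∏_{k=0}^{K} (N − s − k)/(N − k); that is, the expected coverage of a uniformly random coreset of size s is 1 − ∏_{k=0}^{K} (N − s − k)/(N − k). -/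
/-!
Double counting the pairs `(S, x)` with `S` meeting `A x`: for fixed `x`, the `s`-subsets of `V`
missing `A x` are the `s`-subsets of `V \ A x`, so each `x` is covered by
`C(N, s) - C(N - K - 1, s)` of them. The average coverage is therefore
`1 - C(N - K - 1, s) / C(N, s)`, and removing one element at a time,
`C(n + 1, s) * (n + 1 - s) = C(n, s) * (n + 1)` turns this ratio into the product.
-/

open Finset

namespace Finset

variable {α : Type*} [DecidableEq α]

theorem filter_powersetCard_disjoint (V A : Finset α) (s : ℕ) :
    {S ∈ V.powersetCard s | Disjoint S A} = (V \ A).powersetCard s := by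
  ext S
  simp only [mem_filter, mem_powersetCard, subset_sdiff]
  tauto

theorem card_filter_powersetCard_inter_nonempty_add {V A : Finset α} (hAV : A ⊆ V) (s : ℕ) :
    #{S ∈ V.powersetCard s | (S ∩ A).Nonempty} + (#V - #A).choose s = (#V).choose s := by
  have hmiss : #{S ∈ V.powersetCard s | ¬(S ∩ A).Nonempty} = (#V - #A).choose s := by
    simp_rw [not_nonempty_iff_eq_empty, ← disjoint_iff_inter_eq_empty,
      filter_powersetCard_disjoint, card_powersetCard, card_sdiff_of_subset hAV]
  rw [← hmiss, card_filter_add_card_filter_not, card_powersetCard]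

theorem sum_card_filter_inter_nonempty_add {V : Finset α} {A : α → Finset α} {m : ℕ}
    (hAV : ∀ x ∈ V, A x ⊆ V) (hA : ∀ x ∈ V, #(A x) = m) (s : ℕ) :
    ∑ S ∈ V.powersetCard s, #{x ∈ V | (S ∩ A x).Nonempty} + #V * (#V - m).choose s
      = #V * (#V).choose s := by
  have hswap := sum_card_bipartiteAbove_eq_sum_card_bipartiteBelow
    (s := V.powersetCard s) (t := V) (r := fun S x => (S ∩ A x).Nonempty)
  simp only [bipartiteAbove, bipartiteBelow] at hswap
  calc _ = ∑ x ∈ V, (#{S ∈ V.powersetCard s | (S ∩ A x).Nonempty} + (#V - m).choose s) := by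
        rw [hswap, sum_add_distrib, sum_const, smul_eq_mul]
    _ = ∑ x ∈ V, (#V).choose s := sum_congr rfl fun x hx => by
        rw [← hA x hx]; exact card_filter_powersetCard_inter_nonempty_add (hAV x hx) s
    _ = _ := by rw [sum_const, smul_eq_mul]

end Finset

theorem prod_range_sub_div_sub_eq_choose_div {N s m : ℕ} (h : s + m ≤ N) :
    ∏ k ∈ range m, ((N - s - k : ℕ) : ℚ) / ((N - k : ℕ) : ℚ)
      = ((N - m).choose s : ℚ) / (N.choose s : ℚ) := by
  induction m with
  | zero =>
    have : (N.choose s : ℚ) ≠ 0 := by exact_mod_cast (Nat.choose_pos (by omega)).ne'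
    simp [this]
  | succ m ih =>
    obtain ⟨n, hn⟩ : ∃ n, N - m = n + 1 := ⟨N - m - 1, by omega⟩
    have hstep : ((n + 1).choose s : ℚ) * ((n + 1 - s : ℕ) : ℚ) = n.choose s * (n + 1) := by
      exact_mod_cast (Nat.choose_mul_succ_eq n s).symm
    rw [prod_range_succ, ih (by omega), hn, show N - s - m = n + 1 - s by omega,
      show N - (m + 1) = n by omega]
    push_cast
    rw [div_mul_div_comm, hstep, mul_comm, mul_comm (N.choose s : ℚ),
      mul_div_mul_left _ _ (by positivity : (n : ℚ) + 1 ≠ 0)]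

/-- Let `|V| = N ≥ 1`, `s ≤ N − K − 1`, and assume each `x ∈ V` is
assigned a neighborhood `A x ⊆ V` with `|A x| = K + 1`.  For an `s`-subset `S ⊆ V`
set `coverage(S) = |{x ∈ V : S ∩ A x ≠ ∅}| / N`.  Then the average of `coverage(S)`
over all `s`-element subsets `S` of `V` equals
`1 − ∏_{k=0}^{K} (N − s − k)/(N − k)`. -/
theorem expected_coverage
    {α : Type*} [DecidableEq α] (V : Finset α) (N K s : ℕ)
    (hV : V.card = N) (hN : 1 ≤ N) (hs : s ≤ N - K - 1)
    (A : α → Finset α) (hAV : ∀ x ∈ V, A x ⊆ V) (hA : ∀ x ∈ V, (A x).card = K + 1) :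
    (∑ S ∈ V.powersetCard s,
        ((V.filter (fun x => (S ∩ A x).Nonempty)).card : ℚ) / (N : ℚ))
        / ((V.powersetCard s).card : ℚ)
      = 1 - ∏ k ∈ Finset.range (K + 1), ((N - s - k : ℕ) : ℚ) / ((N - k : ℕ) : ℚ) := by
  obtain ⟨x₀, hx₀⟩ : V.Nonempty := by rw [← card_pos, hV]; omega
  have hKN : K + 1 ≤ N := hV ▸ hA x₀ hx₀ ▸ card_le_card (hAV x₀ hx₀)
  have hcovered : ∑ S ∈ V.powersetCard s, (#{x ∈ V | (S ∩ A x).Nonempty} : ℚ)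
      = N * (N.choose s - (N - (K + 1)).choose s) := by
    rw [mul_sub, eq_sub_iff_add_eq, ← hV]
    exact_mod_cast sum_card_filter_inter_nonempty_add hAV hA s
  have hchoose : (N.choose s : ℚ) ≠ 0 := by exact_mod_cast (Nat.choose_pos (by omega)).ne'
  rw [← sum_div, hcovered, card_powersetCard, hV, prod_range_sub_div_sub_eq_choose_div (by omega)]
  field_simp
end

section
/- Let V be a finite set, let m ≥ 1 be a natural number with m ≤ |V|, and let f be a function from subsets of V to ℝ satisfying f(∅) = 0, monotonicity (A ⊆ B ⊆ V implies f(A) ≤ f(B)), and submodularity (for all A ⊆ B ⊆ V and k ∈ V \ B, f(A ∪ {k}) − f(A) ≥ f(B ∪ {k}) − f(B)). Let ∅ = S_0 ⊆ S_1 ⊆ ⋯ ⊆ S_m ⊆ V be a greedy chain, i.e. for each t with 1 ≤ t ≤ m there is v_t ∈ V \ S_{t−1} with S_t = S_{t−1} ∪ {v_t} and f(S_t) − f(S_{t−1}) ≥ f(S_{t−1} ∪ {v}) − f(S_{t−1}) for every v ∈ V \ S_{t−1}. Then f(S_m) ≥ (1 − (1 − 1/m)^m) · f(T) for every subset T ⊆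 V with |T| = m; in particular f(S_m) ≥ (1 − 1/e) · max_{T ⊆ V, |T| = m} f(T). -/
/-!
Greedy closes a `1/m` fraction of the remaining gap `f T - f S` at every step: by
submodularity `f T - f S ≤ f (S ∪ T) - f S` is at most the sum of the `≤ m` marginal gains of
the elements of `T`, each of which is dominated by the gain of the greedy choice. Hence after
`m` steps the gap is at most `(1 - 1/m)^m f T ≤ e⁻¹ f T`.
-/

section

open Finset

variable {α : Type*} [DecidableEq α]

def SubmodularOn (V : Finset α) (f : Finset α → ℝ) : Prop :=
  ∀ A B : Finset α, A ⊆ B → B ⊆ V → ∀ k ∈ V, k ∉ B →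
    f (insert k A) - f A ≥ f (insert k B) - f B

namespace SubmodularOn

variable {V A B S T : Finset α} {f : Finset α → ℝ}

theorem sub_le_sum_marginal (hf : SubmodularOn V f) (hA : A ⊆ V) (hB : B ⊆ V) :
    f (A ∪ B) - f A ≤ ∑ v ∈ B \ A, (f (insert v A) - f A) := by
  induction B using Finset.induction_on with
  | empty => simp
  | insert b B hbB ih =>
    have hB' : B ⊆ V := (subset_insert b B).trans hB
    by_cases hbA : b ∈ A
    · rw [union_insert, insert_eq_of_mem (mem_union_left B hbA), insert_sdiff_of_mem B hbA]
      exact ih hB'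
    · have hbAB : b ∉ A ∪ B := by simp [hbA, hbB]
      have hb : b ∈ V := hB (mem_insert_self b B)
      have hdiminishing := hf A (A ∪ B) subset_union_left (union_subset hA hB') b hb hbAB
      rw [union_insert, insert_sdiff_of_notMem B hbA,
        sum_insert fun h => hbB (mem_sdiff.mp h).1]
      linarith [ih hB']

theorem sub_le_card_mul_of_marginal_le (hf : SubmodularOn V f)
    (hmono : MonotoneOn f (Set.Iic V)) (hS : S ⊆ V) (hT : T ⊆ V) {g : ℝ} (hg : 0 ≤ g)
    (hgain : ∀ u ∈ V, u ∉ S → f (insert u S) - f S ≤ g) :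
    f T - f S ≤ #T * g :=
  calc f T - f S ≤ f (S ∪ T) - f S := by
        gcongr
        exact hmono hT (union_subset hS hT) subset_union_right
    _ ≤ ∑ u ∈ T \ S, (f (insert u S) - f S) := hf.sub_le_sum_marginal hS hT
    _ ≤ ∑ _u ∈ T \ S, g := sum_le_sum fun u hu =>
        hgain u (hT (mem_sdiff.mp hu).1) (mem_sdiff.mp hu).2
    _ = #(T \ S) * g := by rw [sum_const, nsmul_eq_mul]
    _ ≤ #T * g := by gcongr; exact sdiff_subset

/-- For `T = ∅` the factor is `1 - 1 / 0 = 1` and the bound is just monotonicity. -/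
theorem sub_insert_le_of_greedy (hf : SubmodularOn V f) (hmono : MonotoneOn f (Set.Iic V))
    (hS : S ⊆ V) (hT : T ⊆ V) {v : α} (hv : v ∈ V)
    (hgreedy : ∀ u ∈ V, u ∉ S → f (insert u S) - f S ≤ f (insert v S) - f S) :
    f T - f (insert v S) ≤ (1 - 1 / #T) * (f T - f S) := by
  have hgain : 0 ≤ f (insert v S) - f S :=
    sub_nonneg.mpr (hmono hS (insert_subset hv hS) (subset_insert v S))
  have hgap : (f T - f S) / #T ≤ f (insert v S) - f S :=
    div_le_of_le_mul₀ (Nat.cast_nonneg _) hgain <| by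
      rw [mul_comm]; exact hf.sub_le_card_mul_of_marginal_le hmono hS hT hgain hgreedy
  rw [one_sub_mul, one_div_mul_eq_div]
  linarith

end SubmodularOn

end

theorem greedy_submodular_guarantee_general
    {α : Type*} [DecidableEq α] (V : Finset α) (m : ℕ) (hm : 1 ≤ m)
    (f : Finset α → ℝ)
    (hempty : f ∅ = 0)
    (hmono : ∀ A B : Finset α, A ⊆ B → B ⊆ V → f A ≤ f B)
    (hsub : ∀ A B : Finset α, A ⊆ B → B ⊆ V → ∀ k ∈ V, k ∉ B →
        f (insert k A) - f A ≥ f (insert k B) - f B)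
    (S : ℕ → Finset α) (hS0 : S 0 = ∅) (hSV : ∀ t ≤ m, S t ⊆ V)
    (hgreedy : ∀ t, 1 ≤ t → t ≤ m → ∃ v ∈ V, v ∉ S (t - 1) ∧
        S t = insert v (S (t - 1)) ∧
        ∀ u ∈ V, u ∉ S (t - 1) →
          f (S t) - f (S (t - 1)) ≥ f (insert u (S (t - 1))) - f (S (t - 1))) :
    (∀ T ⊆ V, T.card = m → f (S m) ≥ (1 - (1 - 1 / (m : ℝ)) ^ m) * f T) ∧
    (∀ T ⊆ V, T.card = m → f (S m) ≥ (1 - 1 / Real.exp 1) * f T) := by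
  have hmono' : MonotoneOn f (Set.Iic V) := fun A _ B hB hAB => hmono A B hAB hB
  have hratio : 0 ≤ 1 - 1 / (m : ℝ) :=
    sub_nonneg.mpr (div_le_one_of_le₀ (by exact_mod_cast hm) (by positivity))
  have hbound : ∀ T ⊆ V, T.card = m → f (S m) ≥ (1 - (1 - 1 / (m : ℝ)) ^ m) * f T := by
    intro T hT hTm
    have hgap := le_geom (u := fun t => f T - f (S t)) hratio m fun t ht => by
      obtain ⟨v, hv, -, hSt, hmax⟩ := hgreedy (t + 1) (Nat.le_add_left 1 t) ht
      rw [Nat.add_sub_cancel] at hSt hmax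
      rw [hSt, ← hTm]
      exact SubmodularOn.sub_insert_le_of_greedy hsub hmono' (hSV t ht.le) hT hv
        fun u hu huS => hSt ▸ hmax u hu huS
    simp only [hS0, hempty, sub_zero] at hgap
    linarith
  refine ⟨hbound, fun T hT hTm => (hbound T hT hTm).trans' ?_⟩
  have hfT : 0 ≤ f T := hempty ▸ hmono ∅ T (Finset.empty_subset T) hT
  have hexp : (1 - 1 / (m : ℝ)) ^ m ≤ 1 / Real.exp 1 := by
    rw [one_div (Real.exp 1), ← Real.exp_neg]
    exact Real.one_sub_div_pow_le_exp_neg (by exact_mod_cast hm)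
  gcongr

/-- (Nemhauser–Wolsey–Fisher) Let `f : 2^V → ℝ` be normalized
(`f ∅ = 0`), monotone, and submodular on the finite set `V`, let `1 ≤ m ≤ |V|`,
and let `∅ = S 0 ⊆ S 1 ⊆ ⋯ ⊆ S m ⊆ V` be a greedy chain: at each step `t`,
`S t = S (t−1) ∪ {v_t}` for some `v_t ∈ V \ S (t−1)` whose marginal gain is
maximal among all elements of `V \ S (t−1)`.  Then
`f (S m) ≥ (1 − (1 − 1/m)^m) · f T` for every `T ⊆ V` with `|T| = m`; in
particular `f (S m) ≥ (1 − 1/e) · f T` for every such `T`, i.e. greedy achieves a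
`(1 − 1/e)`-approximation of `max_{|T| = m} f T`. -/
theorem greedy_submodular_guarantee
    {α : Type*} [DecidableEq α] (V : Finset α) (m : ℕ) (hm : 1 ≤ m)
    (hmV : m ≤ V.card) (f : Finset α → ℝ)
    (hempty : f ∅ = 0)
    (hmono : ∀ A B : Finset α, A ⊆ B → B ⊆ V → f A ≤ f B)
    (hsub : ∀ A B : Finset α, A ⊆ B → B ⊆ V → ∀ k ∈ V, k ∉ B →
        f (insert k A) - f A ≥ f (insert k B) - f B)
    (S : ℕ → Finset α) (hS0 : S 0 = ∅) (hSV : ∀ t ≤ m, S t ⊆ V)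
    (hgreedy : ∀ t, 1 ≤ t → t ≤ m → ∃ v ∈ V, v ∉ S (t - 1) ∧
        S t = insert v (S (t - 1)) ∧
        ∀ u ∈ V, u ∉ S (t - 1) →
          f (S t) - f (S (t - 1)) ≥ f (insert u (S (t - 1))) - f (S (t - 1))) :
    (∀ T ⊆ V, T.card = m → f (S m) ≥ (1 - (1 - 1 / (m : ℝ)) ^ m) * f T) ∧
    (∀ T ⊆ V, T.card = m → f (S m) ≥ (1 - 1 / Real.exp 1) * f T) :=
  greedy_submodular_guarantee_general V m hm f hempty hmono hsub S hS0 hSV hgreedy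
end
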